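/- Let K >= 1 and let q_1, ..., q_K be real numbers with mean q̄ = (1/K) * Σ_{k=1}^K q_k. Then (1/K) * Σ_{k=1}^K exp( K * (q_k - q̄) ) >= 1 + (1/K) * Σ_{k=1}^K min( K^2 * (q_k - q̄)^2 / 4 , K * |q_k - q̄| / 2 ). -/

import Mathlib

open Real Finset

lemma exp_ge_one_add_add_min (x : ℝ) :
    Real.exp x ≥ 1 + x + min (x ^ 2 / 4) (|x| / 2) := by
  rcases le_or_gt (-2) x with h | h
  · have h1 : Real.exp x = (Real.exp (x / 2)) ^ 2 := by
      rw [← Real.exp_nat_mul]; ring_nf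
    have h2 : 1 + x / 2 ≤ Real.exp (x / 2) := by
      linarith [Real.add_one_le_exp (x / 2)]
    have h3 : (0 : ℝ) ≤ 1 + x / 2 := by linarith
    have h4 : Real.exp x ≥ (1 + x / 2) ^ 2 := by
      rw [h1]; exact pow_le_pow_left₀ h3 h2 2
    have h5 : min (x ^ 2 / 4) (|x| / 2) ≤ x ^ 2 / 4 := min_le_left _ _
    nlinarith
  · have habs : |x| = -x := abs_of_neg (by linarith)
    have h5 : min (x ^ 2 / 4) (|x| / 2) ≤ |x| / 2 := min_le_right _ _
    rw [habs] at h5 ⊢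
    have := Real.exp_pos x
    linarith

theorem avg_exp_centered_ge (K : ℕ) (hK : 1 ≤ K) (q : Fin K → ℝ)
    (qbar : ℝ) (hqbar : qbar = (1 / (K : ℝ)) * ∑ k, q k) :
    (1 / (K : ℝ)) * ∑ k, Real.exp ((K : ℝ) * (q k - qbar))
      ≥ 1 + (1 / (K : ℝ)) *
          ∑ k, min ((K : ℝ) ^ 2 * (q k - qbar) ^ 2 / 4) ((K : ℝ) * |q k - qbar| / 2) := by
  have hKpos : (0 : ℝ) < K := by exact_mod_cast Nat.lt_of_lt_of_le Nat.zero_lt_one hK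
  have hKne : (K : ℝ) ≠ 0 := ne_of_gt hKpos
  have hsum0 : ∑ k, (K : ℝ) * (q k - qbar) = 0 := by
    rw [← Finset.mul_sum, Finset.sum_sub_distrib, Finset.sum_const, Finset.card_univ,
      Fintype.card_fin, hqbar]
    field_simp
    rw [nsmul_eq_mul, mul_comm (K : ℝ) ((∑ x, q x) / K), div_mul_cancel₀ _ hKne, sub_self, mul_zero]
  have hpt : ∀ k : Fin K,
      Real.exp ((K : ℝ) * (q k - qbar)) ≥
        1 + (K : ℝ) * (q k - qbar) +
          min ((K : ℝ) ^ 2 * (q k - qbar) ^ 2 / 4) ((K : ℝ) * |q k - qbar| / 2) := by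
    intro k
    have := exp_ge_one_add_add_min ((K : ℝ) * (q k - qbar))
    have habs : |(K : ℝ) * (q k - qbar)| = (K : ℝ) * |q k - qbar| := by
      rw [abs_mul, abs_of_pos hKpos]
    rw [habs, mul_pow] at this
    exact this
  have hsum : ∑ k, Real.exp ((K : ℝ) * (q k - qbar)) ≥
      ∑ k, (1 + (K : ℝ) * (q k - qbar) +
        min ((K : ℝ) ^ 2 * (q k - qbar) ^ 2 / 4) ((K : ℝ) * |q k - qbar| / 2)) :=
    Finset.sum_le_sum fun k _ => hpt k
  rw [Finset.sum_add_distrib, Finset.sum_add_distrib, hsum0, Finset.sum_const,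
    Finset.card_univ, Fintype.card_fin, nsmul_eq_mul, mul_one, add_zero] at hsum
  have hKinv : (0 : ℝ) < 1 / (K : ℝ) := by positivity
  have hrw : 1 + (1 / (K : ℝ)) *
      ∑ k, min ((K : ℝ) ^ 2 * (q k - qbar) ^ 2 / 4) ((K : ℝ) * |q k - qbar| / 2)
      = (1 / (K : ℝ)) * ((K : ℝ) +
        ∑ k, min ((K : ℝ) ^ 2 * (q k - qbar) ^ 2 / 4) ((K : ℝ) * |q k - qbar| / 2)) := by
    field_simp
  rw [ge_iff_le, hrw]
  exact mul_le_mul_of_nonneg_left hsum hKinv.le
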